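/- Let M₁ = (C, W₁, F₁), M₂ = (C, W₂, F₂), M₃ = (C, W₃, F₃) be hereditary Hovey triples on an abelian category with equal cores, satisfying W₃ ∩ F₁ = F₂ and F₃ ⊆ F₁. Then (C ∩ W₂, W₃, F₁) is a Hovey triple, and it equals the right localization M₁/M₂. -/
import Mathlib


open CategoryTheory Limits

universe w v u

section Preamble

variable {A : Type u} [Category.{v} A] [Abelian A] [HasExt.{w} A]

/-- `Ext^n(X, Y) = 0`. -/
def extVanish (X Y : A) (n : ℕ) : Prop := Subsingleton (Abelian.Ext X Y n)

/-- The right `Ext¹`-orthogonal class. -/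
def rightPerp (𝒳 : Set A) : Set A := {Y | ∀ X ∈ 𝒳, extVanish X Y 1}

/-- The left `Ext¹`-orthogonal class. -/
def leftPerp (𝒴 : Set A) : Set A := {X | ∀ Y ∈ 𝒴, extVanish X Y 1}

/-- `(𝒳, 𝒴)` is a cotorsion pair. -/
def IsCotorsionPair (𝒳 𝒴 : Set A) : Prop := 𝒴 = rightPerp 𝒳 ∧ 𝒳 = leftPerp 𝒴

/-- `(𝒳, 𝒴)` is a complete cotorsion pair: it has enough injectives and enough
projectives. -/
def IsCompleteCP (𝒳 𝒴 : Set A) : Prop :=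
  IsCotorsionPair 𝒳 𝒴 ∧
  (∀ M : A, ∃ S : ShortComplex A, S.ShortExact ∧ S.X₁ = M ∧ S.X₂ ∈ 𝒴 ∧ S.X₃ ∈ 𝒳) ∧
  (∀ M : A, ∃ S : ShortComplex A, S.ShortExact ∧ S.X₁ ∈ 𝒴 ∧ S.X₂ ∈ 𝒳 ∧ S.X₃ = M)

/-- `(𝒳, 𝒴)` is a hereditary cotorsion pair: `Ext^i(X, Y) = 0` for all `i ≥ 1`. -/
def IsHereditaryCP (𝒳 𝒴 : Set A) : Prop :=
  IsCotorsionPair 𝒳 𝒴 ∧ ∀ n : ℕ, 1 ≤ n → ∀ X ∈ 𝒳, ∀ Y ∈ 𝒴, extVanish X Y n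

/-- `X` is a retract of `Y`. -/
def IsRetractOf (X Y : A) : Prop := ∃ (i : X ⟶ Y) (r : Y ⟶ X), i ≫ r = 𝟙 X

/-- A class is thick if it is closed under retracts and satisfies two out of three
on short exact sequences. -/
def IsThick (𝒲 : Set A) : Prop :=
  (∀ X Y : A, IsRetractOf X Y → Y ∈ 𝒲 → X ∈ 𝒲) ∧
  ∀ S : ShortComplex A, S.ShortExact →
    ((S.X₁ ∈ 𝒲 → S.X₂ ∈ 𝒲 → S.X₃ ∈ 𝒲) ∧ (S.X₁ ∈ 𝒲 → S.X₃ ∈ 𝒲 → S.X₂ ∈ 𝒲) ∧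
      (S.X₂ ∈ 𝒲 → S.X₃ ∈ 𝒲 → S.X₁ ∈ 𝒲))

/-- A Hovey triple `(𝒞, 𝒲, ℱ)`, i.e. an abelian model structure. -/
def IsHoveyTriple (𝒞 𝒲 ℱ : Set A) : Prop :=
  IsThick 𝒲 ∧ IsCompleteCP (𝒞 ∩ 𝒲) ℱ ∧ IsCompleteCP 𝒞 (𝒲 ∩ ℱ)

/-- A hereditary Hovey triple: both associated cotorsion pairs are hereditary. -/
def IsHereditaryHoveyTriple (𝒞 𝒲 ℱ : Set A) : Prop :=
  IsHoveyTriple 𝒞 𝒲 ℱ ∧ IsHereditaryCP (𝒞 ∩ 𝒲) ℱ ∧ IsHereditaryCP 𝒞 (𝒲 ∩ ℱ)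

end Preamble

section Aux

variable {A : Type u} [Category.{v} A] [Abelian A] [HasExt.{w} A]

lemma extVanish_of_forall_eq_zero {X Y : A} {n : ℕ}
    (h : ∀ x : Abelian.Ext X Y n, x = 0) : extVanish X Y n :=
  ⟨fun a b => by rw [h a, h b]⟩

lemma leftPerp_antitone {𝒴 𝒴' : Set A} (h : 𝒴 ⊆ 𝒴') : leftPerp 𝒴' ⊆ leftPerp 𝒴 :=
  fun _ hX Y hY => hX Y (h hY)

/-- The thick class of a Hovey triple is determined by the trivially cofibrant and
trivially fibrant classes. -/
lemma hoveyTriple_weak_char {𝒞 𝒲 ℱ : Set A} (h : IsHoveyTriple 𝒞 𝒲 ℱ) :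
    𝒲 = {X | ∃ S : ShortComplex A, S.ShortExact ∧ S.X₁ = X ∧
      S.X₂ ∈ 𝒲 ∩ ℱ ∧ S.X₃ ∈ 𝒞 ∩ 𝒲} := by
  ext X
  constructor
  · intro hX
    obtain ⟨S, hS, h1, h2, h3⟩ := h.2.2.2.1 X
    refine ⟨S, hS, h1, h2, h3, ?_⟩
    exact (h.1.2 S hS).1 (h1 ▸ hX) h2.1
  · rintro ⟨S, hS, h1, h2, h3⟩
    subst h1
    exact (h.1.2 S hS).2.2 h2.1 h3.2

lemma key_inclusion {𝒞 𝒲₁ ℱ₁ 𝒲₂ ℱ₂ 𝒲₃ : Set A}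
    (h1 : IsHoveyTriple 𝒞 𝒲₁ ℱ₁)
    (hcp2 : 𝒞 ∩ 𝒲₂ = leftPerp ℱ₂)
    (hthick2 : IsThick 𝒲₂) (hthick3 : IsThick 𝒲₃)
    (hWF : 𝒲₃ ∩ ℱ₁ = ℱ₂) (h12 : 𝒞 ∩ 𝒲₁ ⊆ 𝒞 ∩ 𝒲₂) (h13 : 𝒞 ∩ 𝒲₁ ⊆ 𝒞 ∩ 𝒲₃)
    {X : A} (hXC : X ∈ 𝒞) (hX2 : X ∈ 𝒲₂) (hX3 : X ∈ 𝒲₃) :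
    X ∈ 𝒞 ∩ 𝒲₁ := by
  -- `𝒞 ∩ 𝒲₁ = leftPerp ℱ₁`
  have hcp1 : 𝒞 ∩ 𝒲₁ = leftPerp ℱ₁ := h1.2.1.1.2
  rw [hcp1]
  -- take a special exact sequence `0 → F → Q → X → 0` with `F ∈ ℱ₁`, `Q ∈ 𝒞 ∩ 𝒲₁`
  obtain ⟨S, hS, hF, hQ, hX⟩ := h1.2.1.2.2 X
  subst hX
  -- `F = S.X₁ ∈ 𝒲₂ ∩ 𝒲₃` by two-out-of-three
  have hQ2 : S.X₂ ∈ 𝒲₂ := (h12 hQ).2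
  have hQ3 : S.X₂ ∈ 𝒲₃ := (h13 hQ).2
  have hF2 : S.X₁ ∈ 𝒲₂ := (hthick2.2 S hS).2.2 hQ2 hX2
  have hF3 : S.X₁ ∈ 𝒲₃ := (hthick3.2 S hS).2.2 hQ3 hX3
  -- hence `F ∈ ℱ₂`, so `Ext¹(X, F) = 0`, i.e. the extension class vanishes
  have hFF2 : S.X₁ ∈ ℱ₂ := by rw [← hWF]; exact ⟨hF3, hF⟩
  have hXperp : S.X₃ ∈ leftPerp ℱ₂ := by rw [← hcp2]; exact ⟨hXC, hX2⟩
  have hvan : extVanish S.X₃ S.X₁ 1 := hXperp S.X₁ hFF2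
  have hclass : hS.extClass = 0 := by
    haveI : Subsingleton (Abelian.Ext S.X₃ S.X₁ 1) := hvan
    exact Subsingleton.elim _ _
  -- now show `Ext¹(X, F') = 0` for every `F' ∈ ℱ₁`
  intro F' hF'
  apply extVanish_of_forall_eq_zero
  intro x₃
  have hQperp : S.X₂ ∈ leftPerp ℱ₁ := by rw [← hcp1]; exact hQ
  have hvan₂ : extVanish S.X₂ F' 1 := hQperp F' hF'
  have hx₂ : (Abelian.Ext.mk₀ S.g).comp x₃ (zero_add 1) = 0 := by
    haveI : Subsingleton (Abelian.Ext S.X₂ F' 1) := hvan₂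
    exact Subsingleton.elim _ _
  obtain ⟨x₁, hx₁⟩ := Abelian.Ext.contravariant_sequence_exact₃ hS F' x₃ hx₂ (n₀ := 0) rfl
  rw [← hx₁, hclass, Abelian.Ext.zero_comp]

end Aux

theorem statement17 {A : Type u} [Category.{v} A] [Abelian A] [HasExt.{w} A]
    (𝒞 𝒲₁ ℱ₁ 𝒲₂ ℱ₂ 𝒲₃ ℱ₃ : Set A)
    (h1 : IsHereditaryHoveyTriple 𝒞 𝒲₁ ℱ₁)
    (h2 : IsHereditaryHoveyTriple 𝒞 𝒲₂ ℱ₂)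
    (h3 : IsHereditaryHoveyTriple 𝒞 𝒲₃ ℱ₃)
    (hcore12 : 𝒞 ∩ 𝒲₁ ∩ ℱ₁ = 𝒞 ∩ 𝒲₂ ∩ ℱ₂)
    (hcore13 : 𝒞 ∩ 𝒲₁ ∩ ℱ₁ = 𝒞 ∩ 𝒲₃ ∩ ℱ₃)
    (hWF : 𝒲₃ ∩ ℱ₁ = ℱ₂) (hFF : ℱ₃ ⊆ ℱ₁) :
    IsHoveyTriple (𝒞 ∩ 𝒲₂) 𝒲₃ ℱ₁ ∧
    (𝒞 ∩ 𝒲₂) ∩ 𝒲₃ = 𝒞 ∩ 𝒲₁ ∧ 𝒲₃ ∩ ℱ₁ = ℱ₂ ∧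
    ∀ 𝒲 : Set A, IsHoveyTriple (𝒞 ∩ 𝒲₂) 𝒲 ℱ₁ →
      (𝒞 ∩ 𝒲₂) ∩ 𝒲 = 𝒞 ∩ 𝒲₁ → 𝒲 ∩ ℱ₁ = ℱ₂ → 𝒲 = 𝒲₃ := by
  have hcp1 : 𝒞 ∩ 𝒲₁ = leftPerp ℱ₁ := h1.1.2.1.1.2
  have hcp2 : 𝒞 ∩ 𝒲₂ = leftPerp ℱ₂ := h2.1.2.1.1.2
  have hcp3 : 𝒞 ∩ 𝒲₃ = leftPerp ℱ₃ := h3.1.2.1.1.2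
  have hF21 : ℱ₂ ⊆ ℱ₁ := by rw [← hWF]; exact Set.inter_subset_right
  have h12 : 𝒞 ∩ 𝒲₁ ⊆ 𝒞 ∩ 𝒲₂ := by
    rw [hcp1, hcp2]; exact leftPerp_antitone hF21
  have h13 : 𝒞 ∩ 𝒲₁ ⊆ 𝒞 ∩ 𝒲₃ := by
    rw [hcp1, hcp3]; exact leftPerp_antitone hFF
  -- the key identification of classes
  have hkey : (𝒞 ∩ 𝒲₂) ∩ 𝒲₃ = 𝒞 ∩ 𝒲₁ := by
    ext X
    constructor
    · rintro ⟨⟨hXC, hX2⟩, hX3⟩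
      exact key_inclusion h1.1 hcp2 h2.1.1 h3.1.1 hWF h12 h13 hXC hX2 hX3
    · intro hX
      exact ⟨h12 hX, (h13 hX).2⟩
  have hHT : IsHoveyTriple (𝒞 ∩ 𝒲₂) 𝒲₃ ℱ₁ := by
    refine ⟨h3.1.1, ?_, ?_⟩
    · rw [hkey]; exact h1.1.2.1
    · rw [hWF]; exact h2.1.2.1
  refine ⟨hHT, hkey, hWF, ?_⟩
  intro 𝒲 hW hWk hWF'
  rw [hoveyTriple_weak_char hW, hoveyTriple_weak_char hHT, hWk, hWF', hkey, hWF]
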